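/- arXiv:1403.2397 — 2 statements merged into one kernel-verified Lean document; each statement's English description precedes it below -/
import Mathlib

section
/- Every probability measure π on the model space {0,1}^p is the marginal distribution of the final model γ_(p) of some probabilistic forward-stepwise procedure; that is, there exist maps ρ and λ (satisfying the pFS constraints) such that for all γ ∈ {0,1}^p, P(γ_(p) = γ) = π(γ). -/
open Finset

attribute [local instance] Classical.propDecidable

noncomputable section

/-- A model is an inclusion-indicator vector in `{0,1}^p`. -/
abbrev Model (p : ℕ) := Fin p → Bool

/-- Model size `|γ|`: the number of included variables. -/
def msize {p : ℕ} (γ : Model p) : ℕ := (Finset.univ.filter (fun j => γ j = true)).card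

/-- `γ^{+j}` : the model `γ` with variable `j` added. -/
def mplus {p : ℕ} (γ : Model p) (j : Fin p) : Model p := Function.update γ j true

/-- The null model. -/
def mnull (p : ℕ) : Model p := fun _ => false

/-- A sequence of decision variables `(S_t, J_t)`, `t = 1, …, p`. -/
abbrev Dec (p : ℕ) := Fin p → Bool × Fin p

/-- The tentative model `γ_(t)` determined by the decisions `d`. -/
def tent {p : ℕ} (d : Dec p) : ℕ → Model p
  | 0 => mnull p
  | t + 1 =>
    if h : t < p then
      if (d ⟨t, h⟩).1 = true then tent d t
      else mplus (tent d t) (d ⟨t, h⟩).2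
    else tent d t

/-- The procedure has stopped strictly before step `t+1`, i.e. some `S_s = 1` with `s ≤ t`. -/
def stopB {p : ℕ} (d : Dec p) (t : ℕ) : Prop :=
  ∃ s : Fin p, (s : ℕ) < t ∧ (d s).1 = true

/-- Probability of the `t`-th pair of decisions of a pFS procedure with stopping map `ρ`
and selection map `lam` (once stopped, the stopping indicator stays 1 with probability 1;
the selection variable is always drawn from the multinomial with weights `lam`). -/
def stepProb {p : ℕ} (ρ : Model p → ℝ) (lam : Model p → Fin p → ℝ)
    (d : Dec p) (t : Fin p) : ℝ :=
  (if stopB d (t : ℕ) then (if (d t).1 = true then 1 else 0)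
   else if (d t).1 = true then ρ (tent d (t : ℕ)) else 1 - ρ (tent d (t : ℕ)))
  * lam (tent d (t : ℕ)) (d t).2

/-- Probability of a whole decision sequence under the pFS procedure `(ρ, lam)`. -/
def pathProb {p : ℕ} (ρ : Model p → ℝ) (lam : Model p → Fin p → ℝ) (d : Dec p) : ℝ :=
  ∏ t : Fin p, stepProb ρ lam d t

/-- Marginal probability that the final model `γ_(p)` equals `γ`. -/
def finalProb {p : ℕ} (ρ : Model p → ℝ) (lam : Model p → Fin p → ℝ) (γ : Model p) : ℝ :=
  ∑ d : Dec p, if tent d p = γ then pathProb ρ lam d else 0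

/-- Marginal probability that the final model has size `s`. -/
def sizeProb {p : ℕ} (ρ : Model p → ℝ) (lam : Model p → Fin p → ℝ) (s : ℕ) : ℝ :=
  ∑ d : Dec p, if msize (tent d p) = s then pathProb ρ lam d else 0

/-- Validity of a stopping-probability map: values in `[0,1]` on non-full models. -/
def ValidStop {p : ℕ} (ρ : Model p → ℝ) : Prop :=
  ∀ γ : Model p, msize γ < p → 0 ≤ ρ γ ∧ ρ γ ≤ 1

/-- Validity of a selection-probability map: nonnegative, summing to one, and vanishing on
already-included variables, on non-full models. -/
def ValidSel {p : ℕ} (lam : Model p → Fin p → ℝ) : Prop :=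
  ∀ γ : Model p, msize γ < p →
    (∀ j, 0 ≤ lam γ j) ∧ (∑ j, lam γ j) = 1 ∧ (∀ j, γ j = true → lam γ j = 0)

/-- `(ρ, lam)` specify a valid pFS procedure. -/
def IsPFS {p : ℕ} (ρ : Model p → ℝ) (lam : Model p → Fin p → ℝ) : Prop :=
  ValidStop ρ ∧ ValidSel lam

/-- The Markov transition kernel of the pFS chain at step `t` (from `γ_(t-1)` to `γ_(t)`). -/
def kernel {p : ℕ} (ρ : Model p → ℝ) (lam : Model p → Fin p → ℝ)
    (t : ℕ) (γ γ' : Model p) : ℝ :=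
  if msize γ < t - 1 then (if γ' = γ then 1 else 0)
  else if msize γ = t - 1 then
    (if γ' = γ then ρ γ
     else ∑ j ∈ Finset.univ.filter (fun j => γ j = false ∧ γ' = mplus γ j), (1 - ρ γ) * lam γ j)
  else 0

/-!
Draw `γ'` from `π` and add its variables one at a time in a uniformly random order, stopping once
`γ'` is reached. This is a pFS procedure, because the process is Markov in the current model: it
passes through `γ` with probability `visitProb π γ = ∑_{γ' ≥ γ} π γ' / C(|γ'|, |γ|)`, stops there
with probability `π γ / visitProb π γ`, and otherwise moves to `γ + j` with probability
proportional to `visitProb π (γ + j)`. The recurrence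
`∑_{j ∉ γ} visitProb π (γ + j) = (|γ| + 1) (visitProb π γ - π γ)` makes these transition weights
probabilities, and by induction on `t` the procedure is, after `t` steps, still running at `γ`
with probability `visitProb π γ` when `|γ| = t`, and stopped at `γ` with probability `π γ` when
`|γ| < t`.
-/

section Model
variable {p : ℕ}

lemma le_iff_forall_true {γ γ' : Model p} : γ ≤ γ' ↔ ∀ j, γ j = true → γ' j = true := by
  simp only [Pi.le_def, Bool.le_iff_imp]

lemma msize_le (γ : Model p) : msize γ ≤ p :=
  (card_filter_le _ _).trans_eq (card_fin p)

lemma card_filter_eq_false (γ : Model p) : #{j | γ j = false} = p - msize γ := by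
  have h := card_filter_add_card_filter_not (s := univ) (fun j => γ j = true)
  simp only [Bool.not_eq_true, card_univ, Fintype.card_fin] at h
  rw [msize]
  omega

lemma msize_eq_zero_iff {γ : Model p} : msize γ = 0 ↔ γ = mnull p := by
  simp [msize, filter_eq_empty_iff, funext_iff, mnull]

lemma msize_mnull : msize (mnull p) = 0 := msize_eq_zero_iff.mpr rfl

lemma eq_top_of_msize_eq {γ : Model p} (h : msize γ = p) : γ = ⊤ := by
  have : univ.filter (γ · = true) = univ :=
    eq_univ_of_card _ (by simpa [msize] using h)
  funext j
  simpa using (filter_eq_self.mp this) j (mem_univ j)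

lemma msize_strictMono {γ γ' : Model p} (h : γ < γ') : msize γ < msize γ' := by
  refine card_lt_card (Finset.ssubset_iff_subset_ne.mpr
    ⟨fun j => by simpa using le_iff_forall_true.mp h.le j, fun heq => ?_⟩)
  refine h.ne (funext fun j => ?_)
  have := congrArg (j ∈ ·) heq
  simp only [mem_filter, mem_univ, true_and, eq_iff_iff] at this
  cases hj : γ j <;> cases hj' : γ' j <;> simp_all

lemma card_filter_false_true_of_le {γ γ' : Model p} (h : γ ≤ γ') :
    #{j | γ j = false ∧ γ' j = true} = msize γ' - msize γ := by
  have hsub : univ.filter (γ · = true) ⊆ univ.filter (γ' · = true) :=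
    fun j => by simpa using le_iff_forall_true.mp h j
  rw [msize, msize, ← card_sdiff_of_subset hsub]
  congr 1
  ext j
  simp [and_comm]

lemma msize_mplus {γ : Model p} {j : Fin p} (h : γ j = false) :
    msize (mplus γ j) = msize γ + 1 := by
  have : univ.filter (mplus γ j · = true) = insert j (univ.filter (γ · = true)) := by
    ext i
    by_cases hi : i = j <;> simp [mplus, Function.update_apply, hi]
  rw [msize, this, card_insert_of_notMem (by simp [h]), msize]

lemma mplus_le_iff {γ γ' : Model p} {j : Fin p} :
    mplus γ j ≤ γ' ↔ γ' j = true ∧ γ ≤ γ' := by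
  simp only [le_iff_forall_true, mplus, Function.update_apply]
  constructor
  · intro h
    refine ⟨by simpa using h j, fun i hi => h i ?_⟩
    split_ifs <;> simp_all
  · rintro ⟨hj, h⟩ i
    split_ifs with hi
    · simp [hi, hj]
    · exact h i

lemma false_and_mplus_eq_iff {γ γ' : Model p} {j : Fin p} :
    γ j = false ∧ mplus γ j = γ' ↔ γ' j = true ∧ γ = Function.update γ' j false := by
  constructor
  · rintro ⟨h, rfl⟩
    simp [mplus, ← h]
  · rintro ⟨h, rfl⟩
    simp [mplus, ← h]

end Model

lemma natCast_sub_div_choose_succ {t k : ℕ} (h : t < k) :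
    ((k - t : ℕ) : ℝ) / k.choose (t + 1) = (t + 1) / k.choose t := by
  have hc := Nat.choose_succ_right_eq k t
  have h₁ : (k.choose (t + 1) : ℝ) ≠ 0 := by exact_mod_cast (Nat.choose_pos h).ne'
  have h₂ : (k.choose t : ℝ) ≠ 0 := by exact_mod_cast (Nat.choose_pos h.le).ne'
  rw [div_eq_div_iff h₁ h₂]
  exact_mod_cast (by rw [mul_comm, ← hc, mul_comm] :
    (k - t) * k.choose t = (t + 1) * k.choose (t + 1))

section VisitProb
variable {p : ℕ} {π : Model p → ℝ}

variable (π) in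
def visitProb (γ : Model p) : ℝ :=
  ∑ γ', if γ ≤ γ' then π γ' / (msize γ').choose (msize γ) else 0

lemma visitProb_nonneg (hnn : ∀ γ, 0 ≤ π γ) (γ : Model p) : 0 ≤ visitProb π γ :=
  sum_nonneg fun γ' _ => by
    split_ifs
    exacts [div_nonneg (hnn γ') (by positivity), le_rfl]

lemma visitProb_eq_add (γ : Model p) :
    visitProb π γ
      = π γ + ∑ γ' ∈ univ.erase γ, if γ ≤ γ' then π γ' / (msize γ').choose (msize γ) else 0 := by
  rw [visitProb, ← add_sum_erase _ _ (mem_univ γ), if_pos le_rfl, Nat.choose_self, Nat.cast_one,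
    div_one]

lemma le_visitProb (hnn : ∀ γ, 0 ≤ π γ) (γ : Model p) : π γ ≤ visitProb π γ := by
  rw [visitProb_eq_add]
  refine le_add_of_nonneg_right (sum_nonneg fun γ' _ => ?_)
  split_ifs
  · exact div_nonneg (hnn γ') (by positivity)
  · exact le_rfl

lemma visitProb_mnull (hsum : ∑ γ, π γ = 1) : visitProb π (mnull p) = 1 := by
  simp [visitProb, msize_mnull, hsum, show ∀ γ : Model p, mnull p ≤ γ from fun _ => bot_le]

lemma visitProb_of_msize_eq {γ : Model p} (h : msize γ = p) : visitProb π γ = π γ := by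
  rw [visitProb_eq_add, add_eq_left]
  refine sum_eq_zero fun γ' hγ' => if_neg ?_
  rw [eq_top_of_msize_eq h, top_le_iff]
  exact ne_of_mem_erase hγ' ∘ (·.trans (eq_top_of_msize_eq h).symm)

lemma sum_visitProb_mplus (γ : Model p) :
    ∑ j ∈ univ.filter (γ · = false), visitProb π (mplus γ j)
      = (msize γ + 1) * (visitProb π γ - π γ) := by
  set t := msize γ
  let c γ' := π γ' / (msize γ').choose (t + 1)
  have hterm : ∀ γ', (∑ j ∈ univ.filter (γ · = false),
      if mplus γ j ≤ γ' then π γ' / (msize γ').choose (msize (mplus γ j)) else 0)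
        = if γ ≤ γ' then ((msize γ' - t : ℕ) : ℝ) * c γ' else 0 := by
    intro γ'
    split_ifs with hle
    · have hset : (univ.filter (γ · = false)).filter (mplus γ · ≤ γ')
          = univ.filter fun j => γ j = false ∧ γ' j = true := by
        ext j
        simp [mplus_le_iff, hle]
      rw [← sum_filter, hset, ← card_filter_false_true_of_le hle, ← nsmul_eq_mul, ← sum_const]
      refine sum_congr rfl fun j hj => ?_
      rw [msize_mplus (mem_filter.mp hj).2.1]
    · exact sum_eq_zero fun j _ => if_neg fun h => hle (mplus_le_iff.mp h).2
  calc ∑ j ∈ univ.filter (γ · = false), visitProb π (mplus γ j)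
      = ∑ γ', if γ ≤ γ' then ((msize γ' - t : ℕ) : ℝ) * c γ' else 0 := by
        simp only [visitProb]
        rw [sum_comm]
        exact sum_congr rfl fun γ' _ => hterm γ'
    _ = ∑ γ' ∈ univ.erase γ, if γ ≤ γ' then ((msize γ' - t : ℕ) : ℝ) * c γ' else 0 := by
        rw [← add_sum_erase _ _ (mem_univ γ), if_pos le_rfl, Nat.sub_self, Nat.cast_zero,
          zero_mul, zero_add]
    _ = (t + 1) * ∑ γ' ∈ univ.erase γ, if γ ≤ γ' then π γ' / (msize γ').choose t else 0 := by
        rw [mul_sum]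
        refine sum_congr rfl fun γ' hγ' => ?_
        split_ifs with hle
        · have hlt : t < msize γ' :=
            msize_strictMono (lt_of_le_of_ne hle (ne_of_mem_erase hγ').symm)
          rw [mul_div_assoc', mul_comm, mul_div_assoc, natCast_sub_div_choose_succ hlt]
          ring
        · rw [mul_zero]
    _ = (t + 1) * (visitProb π γ - π γ) := by
        rw [visitProb_eq_add, add_sub_cancel_left]

lemma visitProb_mplus_eq_zero (hnn : ∀ γ, 0 ≤ π γ) {γ : Model p} {j : Fin p}
    (hj : γ j = false) (h : visitProb π γ = π γ) : visitProb π (mplus γ j) = 0 := by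
  have hrec := sum_visitProb_mplus (π := π) γ
  rw [h, sub_self, mul_zero] at hrec
  exact (sum_eq_zero_iff_of_nonneg fun i _ => visitProb_nonneg hnn _).mp hrec j (by simp [hj])

end VisitProb

section Procedure
variable {p : ℕ} {π : Model p → ℝ}

variable (π) in
/-- Where `visitProb π γ = 0` the junk division gives `0`; the procedure never reaches such `γ`. -/
def stopOf (γ : Model p) : ℝ := π γ / visitProb π γ

variable (π) in
def selectOf (γ : Model p) (j : Fin p) : ℝ :=
  if γ j = true then 0
  else if π γ < visitProb π γ then
    visitProb π (mplus γ j) / ((msize γ + 1) * (visitProb π γ - π γ))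
  -- reached only where the procedure stops surely; uniform just to satisfy `ValidSel`
  else ((p - msize γ : ℕ) : ℝ)⁻¹

lemma stopOf_nonneg (hnn : ∀ γ, 0 ≤ π γ) (γ : Model p) : 0 ≤ stopOf π γ :=
  div_nonneg (hnn γ) (visitProb_nonneg hnn γ)

lemma stopOf_le_one (hnn : ∀ γ, 0 ≤ π γ) (γ : Model p) : stopOf π γ ≤ 1 :=
  div_le_one_of_le₀ (le_visitProb hnn γ) (visitProb_nonneg hnn γ)

lemma visitProb_mul_stopOf (hnn : ∀ γ, 0 ≤ π γ) (γ : Model p) :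
    visitProb π γ * stopOf π γ = π γ := by
  rcases (visitProb_nonneg hnn γ).eq_or_lt with h | h
  · rw [← h, zero_mul]
    exact le_antisymm (hnn γ) ((le_visitProb hnn γ).trans h.ge)
  · exact mul_div_cancel₀ _ h.ne'

lemma selectOf_of_true {γ : Model p} {j : Fin p} (h : γ j = true) : selectOf π γ j = 0 :=
  if_pos h

lemma selectOf_nonneg (hnn : ∀ γ, 0 ≤ π γ) (γ : Model p) (j : Fin p) : 0 ≤ selectOf π γ j := by
  unfold selectOf
  split_ifs with _ hlt
  · exact le_rfl
  · exact div_nonneg (visitProb_nonneg hnn _) (mul_nonneg (by positivity) (sub_nonneg.mpr hlt.le))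
  · positivity

lemma sum_selectOf {γ : Model p} (h : msize γ < p) :
    ∑ j, selectOf π γ j = 1 := by
  have hsum : ∑ j, selectOf π γ j = ∑ j ∈ univ.filter (γ · = false), selectOf π γ j := by
    rw [sum_filter]
    exact sum_congr rfl fun j _ => by cases hj : γ j <;> simp [selectOf, hj]
  rw [hsum]
  by_cases hlt : π γ < visitProb π γ
  · have hpos : 0 < (msize γ + 1 : ℝ) * (visitProb π γ - π γ) := by
      have := sub_pos.mpr hlt
      positivity
    rw [sum_congr rfl fun j hj => (show selectOf π γ j = visitProb π (mplus γ j) /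
        ((msize γ + 1) * (visitProb π γ - π γ)) by simp [selectOf, (mem_filter.mp hj).2, hlt]),
      ← sum_div, sum_visitProb_mplus, div_self hpos.ne']
  · have hcard : ((p - msize γ : ℕ) : ℝ) ≠ 0 := by exact_mod_cast (Nat.sub_pos_of_lt h).ne'
    rw [sum_congr rfl fun j hj => (show selectOf π γ j = ((p - msize γ : ℕ) : ℝ)⁻¹ by
        simp [selectOf, (mem_filter.mp hj).2, hlt]),
      sum_const, card_filter_eq_false, nsmul_eq_mul, mul_inv_cancel₀ hcard]

lemma visitProb_mul_selectOf (hnn : ∀ γ, 0 ≤ π γ) {γ : Model p} {j : Fin p} (hj : γ j = false) :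
    visitProb π γ * (1 - stopOf π γ) * selectOf π γ j
      = visitProb π (mplus γ j) / (msize γ + 1) := by
  rw [mul_one_sub, visitProb_mul_stopOf hnn]
  by_cases hlt : π γ < visitProb π γ
  · have := sub_pos.mpr hlt
    rw [selectOf, if_neg (by simp [hj]), if_pos hlt]
    field_simp
  · have heq : visitProb π γ = π γ := le_antisymm (not_lt.mp hlt) (le_visitProb hnn γ)
    rw [heq, sub_self, zero_mul, visitProb_mplus_eq_zero hnn hj heq, zero_div]

lemma isPFS_stopOf_selectOf (hnn : ∀ γ, 0 ≤ π γ) : IsPFS (stopOf π) (selectOf π) :=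
  ⟨fun γ _ => ⟨stopOf_nonneg hnn γ, stopOf_le_one hnn γ⟩,
    fun _ h => ⟨selectOf_nonneg hnn _, sum_selectOf h, fun _ => selectOf_of_true⟩⟩

end Procedure

section Trajectory
variable {S B : Type*} (step : S → B → S) (s₀ : S)

def trajectory {n : ℕ} (d : Fin n → B) : ℕ → S
  | 0 => s₀
  | t + 1 => if h : t < n then step (trajectory d t) (d ⟨t, h⟩) else trajectory d t

lemma trajectory_snoc {n : ℕ} (d : Fin n → B) (x : B) {t : ℕ} (ht : t ≤ n) :
    trajectory step s₀ (Fin.snoc d x : Fin (n + 1) → B) t = trajectory step s₀ d t := by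
  induction t with
  | zero => rfl
  | succ t ih =>
    have hsnoc : (Fin.snoc d x : Fin (n + 1) → B) ⟨t, by omega⟩ = d ⟨t, ht⟩ :=
      Fin.snoc_castSucc (i := ⟨t, ht⟩) ..
    rw [trajectory, trajectory, dif_pos (by omega), dif_pos (show t < n from ht), hsnoc,
      ih (by omega)]

lemma trajectory_snoc_last {n : ℕ} (d : Fin n → B) (x : B) :
    trajectory step s₀ (Fin.snoc d x : Fin (n + 1) → B) (n + 1)
      = step (trajectory step s₀ d n) x := by
  rw [trajectory, dif_pos n.lt_succ_self, trajectory_snoc step s₀ d x le_rfl]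
  exact congrArg _ (Fin.snoc_last (α := fun _ => B) ..)

variable [Fintype S] [Fintype B] [DecidableEq S] (w : S → B → ℝ)

def marginal : ℕ → S → ℝ
  | 0 => fun s => if s = s₀ then 1 else 0
  | t + 1 => fun s' => ∑ s, ∑ x, marginal t s * w s x * if step s x = s' then 1 else 0

lemma sum_marginal_succ_mul (t : ℕ) (F : S → ℝ) :
    ∑ s', marginal step s₀ w (t + 1) s' * F s'
      = ∑ s, marginal step s₀ w t s * ∑ x, w s x * F (step s x) := by
  simp only [marginal, sum_mul, mul_sum]
  rw [sum_comm]
  refine sum_congr rfl fun s _ => ?_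
  rw [sum_comm]
  refine sum_congr rfl fun x _ => ?_
  simp [mul_assoc]

theorem sum_prod_weight_mul_trajectory (n : ℕ) (F : S → ℝ) :
    ∑ d : Fin n → B, (∏ t : Fin n, w (trajectory step s₀ d t) (d t)) * F (trajectory step s₀ d n)
      = ∑ s, marginal step s₀ w n s * F s := by
  induction n generalizing F with
  | zero => simp [trajectory, marginal]
  | succ n ih =>
    rw [sum_marginal_succ_mul, ← ih, ← (Fin.snocEquiv fun _ => B).sum_comp,
      Fintype.sum_prod_type, sum_comm]
    refine sum_congr rfl fun d _ => ?_
    rw [mul_sum]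
    refine sum_congr rfl fun x _ => ?_
    simp only [Fin.snocEquiv, Equiv.coe_fn_mk, Fin.prod_univ_castSucc, Fin.snoc_castSucc,
      Fin.snoc_last, Fin.val_castSucc, Fin.val_last, trajectory_snoc_last,
      trajectory_snoc step s₀ d x le_rfl, fun t : Fin n => trajectory_snoc step s₀ d x t.isLt.le]
    ring

end Trajectory

section Chain
variable {p : ℕ} (ρ : Model p → ℝ) (lam : Model p → Fin p → ℝ)

/-- States are pairs (current model, whether the procedure has stopped). -/
def pfsStep (s : Model p × Bool) (x : Bool × Fin p) : Model p × Bool :=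
  (if x.1 = true then s.1 else mplus s.1 x.2, s.2 || x.1)

def pfsWeight (s : Model p × Bool) (x : Bool × Fin p) : ℝ :=
  (if s.2 = true then (if x.1 = true then 1 else 0)
    else if x.1 = true then ρ s.1 else 1 - ρ s.1) * lam s.1 x.2

abbrev pfsMarginal : ℕ → Model p × Bool → ℝ :=
  marginal pfsStep (mnull p, false) (pfsWeight ρ lam)

lemma stopB_succ (d : Dec p) (t : ℕ) :
    stopB d (t + 1) ↔ stopB d t ∨ ∃ h : t < p, (d ⟨t, h⟩).1 = true := by
  constructor
  · rintro ⟨s, hs, hd⟩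
    rcases (Nat.lt_succ_iff_lt_or_eq.mp hs) with hs | rfl
    · exact Or.inl ⟨s, hs, hd⟩
    · exact Or.inr ⟨s.isLt, hd⟩
  · rintro (⟨s, hs, hd⟩ | ⟨h, hd⟩)
    · exact ⟨s, hs.trans t.lt_succ_self, hd⟩
    · exact ⟨⟨t, h⟩, t.lt_succ_self, hd⟩

lemma trajectory_pfsStep (d : Dec p) (t : ℕ) :
    trajectory pfsStep (mnull p, false) d t = (tent d t, decide (stopB d t)) := by
  induction t with
  | zero => simp [trajectory, tent, stopB]
  | succ t ih =>
    rw [trajectory, tent]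
    by_cases h : t < p <;> simp [h, ih, pfsStep, stopB_succ]

lemma stepProb_eq_pfsWeight (d : Dec p) (t : Fin p) :
    stepProb ρ lam d t = pfsWeight ρ lam (trajectory pfsStep (mnull p, false) d t) (d t) := by
  rw [trajectory_pfsStep, stepProb, pfsWeight]
  simp only [decide_eq_true_eq]

lemma finalProb_eq_pfsMarginal (γ : Model p) :
    finalProb ρ lam γ
      = pfsMarginal ρ lam p (γ, true)
        + pfsMarginal ρ lam p (γ, false) := by
  have hpath : ∀ d : Dec p, (if tent d p = γ then pathProb ρ lam d else 0)
      = (∏ t : Fin p, pfsWeight ρ lam (trajectory pfsStep (mnull p, false) d t) (d t))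
        * if (trajectory pfsStep (mnull p, false) d p).1 = γ then 1 else 0 := by
    intro d
    rw [trajectory_pfsStep d p, pathProb, mul_ite, mul_one, mul_zero]
    simp only [stepProb_eq_pfsWeight]
  rw [finalProb, sum_congr rfl fun d _ => hpath d, sum_prod_weight_mul_trajectory pfsStep
    (mnull p, false) (pfsWeight ρ lam) p fun s => if s.1 = γ then 1 else 0,
    Fintype.sum_prod_type]
  simp only [mul_ite, mul_one, mul_zero, Fintype.sum_bool, sum_add_distrib, sum_ite_eq',
    mem_univ, if_true, add_comm]

lemma pfsMarginal_succ_stopped (t : ℕ) (γ : Model p) :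
    pfsMarginal ρ lam (t + 1) (γ, true)
      = (pfsMarginal ρ lam t (γ, true)
        + pfsMarginal ρ lam t (γ, false) * ρ γ) * ∑ j, lam γ j := by
  simp [marginal, Fintype.sum_prod_type, pfsStep, pfsWeight, mul_sum, sum_add_distrib, add_mul,
    mul_assoc]

lemma pfsMarginal_succ_running (t : ℕ) (γ' : Model p) :
    pfsMarginal ρ lam (t + 1) (γ', false)
      = ∑ γ, ∑ j, pfsMarginal ρ lam t (γ, false)
          * (1 - ρ γ) * lam γ j * if mplus γ j = γ' then 1 else 0 := by
  simp [marginal, Fintype.sum_prod_type, pfsStep, pfsWeight, mul_assoc]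

end Chain

section Invariant
variable {p : ℕ} {π : Model p → ℝ}

theorem pfsMarginal_running_eq_visitProb (hnn : ∀ γ, 0 ≤ π γ) (hsum : ∑ γ, π γ = 1) (t : ℕ)
    (γ' : Model p) :
    pfsMarginal (stopOf π) (selectOf π) t (γ', false)
      = if msize γ' = t then visitProb π γ' else 0 := by
  induction t generalizing γ' with
  | zero =>
    simp only [marginal, Prod.mk.injEq, and_true, msize_eq_zero_iff]
    split_ifs with h
    · rw [h, visitProb_mnull hsum]
    · rfl
  | succ t ih =>
    set c := if msize γ' = t + 1 then visitProb π γ' / (t + 1) else 0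
    have hterm : ∀ γ j, (if msize γ = t then visitProb π γ else 0) * (1 - stopOf π γ)
        * selectOf π γ j * (if mplus γ j = γ' then 1 else 0)
          = if γ j = false ∧ mplus γ j = γ' then c else 0 := by
      intro γ j
      by_cases hj : γ j = false
      · by_cases hm : mplus γ j = γ'
        · subst hm
          simp only [c, msize_mplus hj, add_left_inj, hj, and_self, if_true, mul_one]
          split_ifs with ht
          · rw [visitProb_mul_selectOf hnn hj, ht]
          · simp
        · simp [hm]
      · simp [selectOf_of_true (Bool.eq_true_of_not_eq_false hj), hj]
    have hfiber : ∀ j, (∑ γ : Model p, if γ j = false ∧ mplus γ j = γ' then c else 0)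
        = if γ' j = true then c else 0 := by
      intro j
      by_cases hj : γ' j = true <;> simp [false_and_mplus_eq_iff, hj]
    rw [pfsMarginal_succ_running]
    simp only [ih, hterm]
    rw [sum_comm, sum_congr rfl fun j _ => hfiber j, ← sum_filter, sum_const, nsmul_eq_mul]
    simp only [c]
    split_ifs with h
    · rw [← msize, h]
      push_cast
      field_simp
    · rw [mul_zero]

theorem pfsMarginal_stopped_eq (hnn : ∀ γ, 0 ≤ π γ) (hsum : ∑ γ, π γ = 1) {t : ℕ} (ht : t ≤ p)
    (γ : Model p) :
    pfsMarginal (stopOf π) (selectOf π) t (γ, true)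
      = if msize γ < t then π γ else 0 := by
  induction t with
  | zero => simp [marginal]
  | succ t ih =>
    rw [pfsMarginal_succ_stopped, ih (by omega), pfsMarginal_running_eq_visitProb hnn hsum]
    rcases lt_trichotomy (msize γ) t with h | h | h
    · simp [h, h.ne, h.trans t.lt_succ_self, sum_selectOf (h.trans_le (by omega : t ≤ p))]
    · simp [h, visitProb_mul_stopOf hnn, sum_selectOf (by omega : msize γ < p)]
    · simp [h.not_gt, h.ne', Nat.not_lt.mpr h]

end Invariant

/-- **Generality of the pFS representation.** Every probability measure on the model space
`{0,1}^p` is the marginal distribution of the final model of some pFS procedure. -/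
theorem pFS_generality {p : ℕ} (π : Model p → ℝ) (hnn : ∀ γ, 0 ≤ π γ)
    (hsum : ∑ γ : Model p, π γ = 1) :
    ∃ (ρ : Model p → ℝ) (lam : Model p → Fin p → ℝ),
      IsPFS ρ lam ∧ ∀ γ : Model p, finalProb ρ lam γ = π γ := by
  refine ⟨stopOf π, selectOf π, isPFS_stopOf_selectOf hnn, fun γ => ?_⟩
  rw [finalProb_eq_pfsMarginal, pfsMarginal_stopped_eq hnn hsum le_rfl,
    pfsMarginal_running_eq_visitProb hnn hsum]
  rcases (msize_le γ).lt_or_eq with h | h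
  · simp [h, h.ne]
  · simp [h, visitProb_of_msize_eq h]
end
end

section
/- Under the posterior pFS representation of the information propagation theorem, the φ-function satisfies φ(γ) = Σ_{γ' ⊇ γ} P(γ_(p) = γ' | γ_(|γ|) = γ) · BF₀(γ') for every γ reachable by the prior chain; that is, φ(γ) is the conditional expectation of BF₀ of the final model given the chain visits γ at step |γ|. -/
open Finset

attribute [local instance] Classical.propDecidable

noncomputable section

section Aux

variable {p : ℕ}

/-! ### Basic lemmas about `tent`, `stopB`, `msize` -/

lemma tent_succ_lt (d : Dec p) (t : ℕ) (h : t < p) :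
    tent d (t + 1) =
      if (d ⟨t, h⟩).1 = true then tent d t else mplus (tent d t) (d ⟨t, h⟩).2 := by
  simp [tent, h]

lemma tent_succ_ge (d : Dec p) (t : ℕ) (h : ¬ t < p) : tent d (t + 1) = tent d t := by
  simp [tent, h]

lemma tent_congr (d d' : Dec p) : ∀ {t : ℕ},
    (∀ u : Fin p, (u : ℕ) < t → d u = d' u) → tent d t = tent d' t := by
  intro t
  induction t with
  | zero => intro _; rfl
  | succ t ih =>
    intro h
    by_cases hp : t < p
    · rw [tent_succ_lt d t hp, tent_succ_lt d' t hp, h ⟨t, hp⟩ (Nat.lt_succ_self t),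
        ih (fun u hu => h u (Nat.lt_succ_of_lt hu))]
    · rw [tent_succ_ge d t hp, tent_succ_ge d' t hp]
      exact ih (fun u hu => h u (Nat.lt_succ_of_lt hu))

lemma stopB_congr (d d' : Dec p) {t : ℕ}
    (h : ∀ u : Fin p, (u : ℕ) < t → d u = d' u) : stopB d t ↔ stopB d' t := by
  constructor
  · rintro ⟨s, hs, h1⟩; exact ⟨s, hs, by rw [← h s hs]; exact h1⟩
  · rintro ⟨s, hs, h1⟩; exact ⟨s, hs, by rw [h s hs]; exact h1⟩

lemma mplus_self {γ : Model p} {j : Fin p} (h : γ j = true) : mplus γ j = γ := by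
  rw [mplus, ← h, Function.update_eq_self]

lemma mplus_superset {γ : Model p} {j j' : Fin p} (h : γ j' = true) : mplus γ j j' = true := by
  rw [mplus, Function.update_apply]
  split <;> simp [h]

lemma msize_mplus_le (γ : Model p) (j : Fin p) : msize (mplus γ j) ≤ msize γ + 1 := by
  cases hj : γ j
  · exact (msize_mplus hj).le
  · rw [mplus_self hj]; omega

lemma msize_tent_le (d : Dec p) : ∀ t, msize (tent d t) ≤ t := by
  intro t
  induction t with
  | zero =>
    simp [tent, msize, mnull]
  | succ t ih =>
    by_cases hp : t < p
    · rw [tent_succ_lt d t hp]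
      split
      · omega
      · have := msize_mplus_le (tent d t) (d ⟨t, hp⟩).2; omega
    · rw [tent_succ_ge d t hp]; omega

end Aux

section GDef

variable {p : ℕ} (ρ : Model p → ℝ) (lam : Model p → Fin p → ℝ)

/-- Conditional probability of ending at `γ'` starting from `γ`, with `n` steps remaining. -/
def G : ℕ → Model p → Model p → ℝ
  | 0, γ, γ' => if γ' = γ then 1 else 0
  | n + 1, γ, γ' =>
      ρ γ * (if γ' = γ then 1 else 0) +
        (1 - ρ γ) * ∑ j ∈ Finset.univ.filter (fun j => γ j = false),
          lam γ j * G n (mplus γ j) γ'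

lemma G_zero : ∀ (n : ℕ) (γ γ' : Model p),
    ¬ (∀ j, γ j = true → γ' j = true) → G ρ lam n γ γ' = 0 := by
  intro n
  induction n with
  | zero =>
    intro γ γ' h
    rw [G, if_neg]
    rintro rfl
    exact h (fun _ h => h)
  | succ n ih =>
    intro γ γ' h
    rw [G]
    have h1 : (if γ' = γ then (1:ℝ) else 0) = 0 := by
      rw [if_neg]; rintro rfl; exact h (fun _ h => h)
    have h2 : ∀ j ∈ Finset.univ.filter (fun j => γ j = false),
        lam γ j * G ρ lam n (mplus γ j) γ' = 0 := by
      intro j _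
      rw [ih (mplus γ j) γ' (fun hc => h (fun j' hj' => hc j' (mplus_superset hj'))), mul_zero]
    rw [h1, Finset.sum_eq_zero h2, mul_zero, mul_zero, add_zero]

lemma G_sum (BF φ : Model p → ℝ)
    (hφfull : ∀ γ : Model p, msize γ = p → φ γ = BF γ)
    (hφrec : ∀ γ : Model p, msize γ < p →
      φ γ = ρ γ * BF γ + (1 - ρ γ) *
        ∑ j ∈ Finset.univ.filter (fun j => γ j = false), lam γ j * φ (mplus γ j)) :
    ∀ (n : ℕ) (γ : Model p), msize γ + n = p →
      (∑ γ' ∈ Finset.univ.filter (fun γ' : Model p => ∀ j, γ j = true → γ' j = true),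
          G ρ lam n γ γ' * BF γ') = φ γ := by
  intro n
  induction n with
  | zero =>
    intro γ hn
    have hcongr : ∀ γ' ∈ Finset.univ.filter
        (fun γ' : Model p => ∀ j, γ j = true → γ' j = true),
        G ρ lam 0 γ γ' * BF γ' = if γ' = γ then BF γ' else 0 := by
      intro γ' _
      rw [G]
      split <;> simp
    rw [Finset.sum_congr rfl hcongr, Finset.sum_ite_eq' _ γ (fun γ' => BF γ'),
      if_pos (by simp), hφfull γ (by omega)]
  | succ n ih =>
    intro γ hn
    have hlt : msize γ < p := by omega
    have hsum1 : (∑ γ' ∈ Finset.univ.filter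
        (fun γ' : Model p => ∀ j, γ j = true → γ' j = true),
          (if γ' = γ then (1:ℝ) else 0) * BF γ') = BF γ := by
      have hcongr : ∀ γ' ∈ Finset.univ.filter
          (fun γ' : Model p => ∀ j, γ j = true → γ' j = true),
          (if γ' = γ then (1:ℝ) else 0) * BF γ' = if γ' = γ then BF γ' else 0 := by
        intro γ' _; split <;> simp
      rw [Finset.sum_congr rfl hcongr, Finset.sum_ite_eq' _ γ (fun γ' => BF γ'), if_pos (by simp)]
    have hswap : (∑ γ' ∈ Finset.univ.filter
        (fun γ' : Model p => ∀ j, γ j = true → γ' j = true),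
        (∑ j ∈ Finset.univ.filter (fun j => γ j = false),
          lam γ j * G ρ lam n (mplus γ j) γ') * BF γ')
        = ∑ j ∈ Finset.univ.filter (fun j => γ j = false),
            lam γ j * φ (mplus γ j) := by
      calc (∑ γ' ∈ Finset.univ.filter
            (fun γ' : Model p => ∀ j, γ j = true → γ' j = true),
            (∑ j ∈ Finset.univ.filter (fun j => γ j = false),
              lam γ j * G ρ lam n (mplus γ j) γ') * BF γ')
          = ∑ γ' ∈ Finset.univ.filter
              (fun γ' : Model p => ∀ j, γ j = true → γ' j = true),
              ∑ j ∈ Finset.univ.filter (fun j => γ j = false),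
                lam γ j * (G ρ lam n (mplus γ j) γ' * BF γ') := by
            refine Finset.sum_congr rfl fun γ' _ => ?_
            rw [Finset.sum_mul]
            exact Finset.sum_congr rfl fun j _ => by ring
        _ = ∑ j ∈ Finset.univ.filter (fun j => γ j = false),
              ∑ γ' ∈ Finset.univ.filter
                (fun γ' : Model p => ∀ j, γ j = true → γ' j = true),
                lam γ j * (G ρ lam n (mplus γ j) γ' * BF γ') := Finset.sum_comm
        _ = ∑ j ∈ Finset.univ.filter (fun j => γ j = false),
              lam γ j * φ (mplus γ j) := by
            refine Finset.sum_congr rfl fun j hj => ?_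
            have hjf : γ j = false := by simpa using hj
            have hsub : (Finset.univ.filter
                (fun γ' : Model p => ∀ j', mplus γ j j' = true → γ' j' = true)) ⊆
                (Finset.univ.filter
                  (fun γ' : Model p => ∀ j', γ j' = true → γ' j' = true)) := by
              intro γ' hγ'
              simp only [Finset.mem_filter, Finset.mem_univ, true_and] at hγ' ⊢
              exact fun j' hj' => hγ' j' (mplus_superset hj')
            have hrestrict : (∑ γ' ∈ Finset.univ.filter
                (fun γ' : Model p => ∀ j', γ j' = true → γ' j' = true),
                  G ρ lam n (mplus γ j) γ' * BF γ')
                = ∑ γ' ∈ Finset.univ.filter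
                    (fun γ' : Model p => ∀ j', mplus γ j j' = true → γ' j' = true),
                    G ρ lam n (mplus γ j) γ' * BF γ' := by
              refine (Finset.sum_subset hsub fun γ' _ hγ' => ?_).symm
              simp only [Finset.mem_filter, Finset.mem_univ, true_and] at hγ'
              rw [G_zero ρ lam n _ _ hγ', zero_mul]
            rw [← Finset.mul_sum, hrestrict,
              ih (mplus γ j) (by rw [msize_mplus hjf]; omega)]
    have expand : ∀ γ' ∈ Finset.univ.filter
        (fun γ' : Model p => ∀ j, γ j = true → γ' j = true),
        G ρ lam (n + 1) γ γ' * BF γ'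
          = ρ γ * ((if γ' = γ then (1:ℝ) else 0) * BF γ')
            + (1 - ρ γ) * ((∑ j ∈ Finset.univ.filter (fun j => γ j = false),
                lam γ j * G ρ lam n (mplus γ j) γ') * BF γ') := by
      intro γ' _
      rw [G]
      ring
    rw [Finset.sum_congr rfl expand, Finset.sum_add_distrib, ← Finset.mul_sum, ← Finset.mul_sum,
      hsum1, hswap, ← hφrec γ hlt]

end GDef

section PathAux

variable {p : ℕ} (ρ : Model p → ℝ) (lam : Model p → Fin p → ℝ)

/-- Product of step probabilities before time `t`. -/
def preP (d : Dec p) (t : ℕ) : ℝ :=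
  ∏ u ∈ Finset.univ.filter (fun u : Fin p => (u : ℕ) < t), stepProb ρ lam d u

/-- Product of step probabilities from time `t` on. -/
def sufP (d : Dec p) (t : ℕ) : ℝ :=
  ∏ u ∈ Finset.univ.filter (fun u : Fin p => t ≤ (u : ℕ)), stepProb ρ lam d u

lemma pathProb_eq_pre_suf (d : Dec p) (t : ℕ) :
    pathProb ρ lam d = preP ρ lam d t * sufP ρ lam d t := by
  rw [pathProb, preP, sufP,
    ← Finset.prod_filter_mul_prod_filter_not Finset.univ (fun u : Fin p => (u : ℕ) < t)]
  congr 1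
  apply Finset.prod_congr _ fun _ _ => rfl
  ext u
  simp [not_lt]

lemma sufP_of_ge (d : Dec p) {t : ℕ} (h : p ≤ t) : sufP ρ lam d t = 1 := by
  rw [sufP]
  apply Finset.prod_eq_one
  intro u hu
  simp only [Finset.mem_filter] at hu
  omega

lemma sufP_succ (d : Dec p) {t : ℕ} (h : t < p) :
    sufP ρ lam d t = stepProb ρ lam d ⟨t, h⟩ * sufP ρ lam d (t + 1) := by
  rw [sufP, sufP]
  have hset : Finset.univ.filter (fun u : Fin p => t ≤ (u : ℕ))
      = insert ⟨t, h⟩ (Finset.univ.filter (fun u : Fin p => t + 1 ≤ (u : ℕ))) := by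
    ext u
    simp only [Finset.mem_filter, Finset.mem_univ, true_and, Finset.mem_insert, Fin.ext_iff]
    omega
  rw [hset, Finset.prod_insert (by simp)]

lemma preP_succ (d : Dec p) {t : ℕ} (h : t < p) :
    preP ρ lam d (t + 1) = stepProb ρ lam d ⟨t, h⟩ * preP ρ lam d t := by
  rw [preP, preP]
  have hset : Finset.univ.filter (fun u : Fin p => (u : ℕ) < t + 1)
      = insert ⟨t, h⟩ (Finset.univ.filter (fun u : Fin p => (u : ℕ) < t)) := by
    ext u
    simp only [Finset.mem_filter, Finset.mem_univ, true_and, Finset.mem_insert, Fin.ext_iff]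
    omega
  rw [hset, Finset.prod_insert (by simp)]

lemma preP_succ_of_ge (d : Dec p) {t : ℕ} (h : ¬ t < p) :
    preP ρ lam d (t + 1) = preP ρ lam d t := by
  rw [preP, preP]
  apply Finset.prod_congr _ fun _ _ => rfl
  ext u
  have := u.isLt
  simp only [Finset.mem_filter, Finset.mem_univ, true_and]
  omega

/-- If the chain has already stopped before `t` and the prefix has nonzero probability,
the tentative model at time `t` has size `< t`. -/
lemma preP_stop (d : Dec p) : ∀ t : ℕ, stopB d t → preP ρ lam d t ≠ 0 →
    msize (tent d t) < t := by
  intro t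
  induction t with
  | zero => rintro ⟨s, hs, _⟩ _; omega
  | succ t ih =>
    intro hstop hpre
    by_cases hp : t < p
    · rw [preP_succ ρ lam d hp] at hpre
      have hpre' : preP ρ lam d t ≠ 0 := fun h => hpre (by rw [h, mul_zero])
      by_cases hst : stopB d t
      · have hms := ih hst hpre'
        rw [tent_succ_lt d t hp]
        split
        · omega
        · have := msize_mplus_le (tent d t) (d ⟨t, hp⟩).2; omega
      · obtain ⟨s, hs, h1⟩ := hstop
        have hst' : (s : ℕ) = t := by
          by_contra hne
          exact hst ⟨s, by omega, h1⟩
        have hseq : s = ⟨t, hp⟩ := Fin.ext hst'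
        rw [tent_succ_lt d t hp, if_pos (hseq ▸ h1)]
        have := msize_tent_le d t
        omega
    · rw [preP_succ_of_ge ρ lam d hp] at hpre
      have hpt : p ≤ t := by omega
      obtain ⟨s, hs, h1⟩ := hstop
      have hst : stopB d t := ⟨s, by have := s.isLt; omega, h1⟩
      rw [tent_succ_ge d t hp]
      have := ih hst hpre
      omega

end PathAux

section SplitAux

variable {p : ℕ} (ρ : Model p → ℝ) (lam : Model p → Fin p → ℝ)

lemma split_coord' (t : ℕ) (ht : t < p) (d0 : Dec p) (γ' : Model p) :
    (∑ d : Dec p, if (∀ u : Fin p, (u : ℕ) < t → d u = d0 u) ∧ tent d p = γ'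
        then sufP ρ lam d t else 0)
      = ∑ x : Bool × Fin p, ∑ d : Dec p,
          if (∀ u : Fin p, (u : ℕ) < t + 1 → d u = Function.update d0 ⟨t, ht⟩ x u)
              ∧ tent d p = γ'
          then sufP ρ lam d t else 0 := by
  have hcomm : (∑ x : Bool × Fin p, ∑ d : Dec p,
      if (∀ u : Fin p, (u : ℕ) < t + 1 → d u = Function.update d0 ⟨t, ht⟩ x u)
          ∧ tent d p = γ'
      then sufP ρ lam d t else 0)
      = ∑ d : Dec p, ∑ x : Bool × Fin p,
          if (∀ u : Fin p, (u : ℕ) < t + 1 → d u = Function.update d0 ⟨t, ht⟩ x u)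
              ∧ tent d p = γ'
          then sufP ρ lam d t else 0 := Finset.sum_comm
  rw [hcomm]
  refine Finset.sum_congr rfl fun d _ => ?_
  symm
  have key : ∀ x : Bool × Fin p,
      ((∀ u : Fin p, (u : ℕ) < t + 1 → d u = Function.update d0 ⟨t, ht⟩ x u) ∧ tent d p = γ')
        ↔ (x = d ⟨t, ht⟩ ∧ ((∀ u : Fin p, (u : ℕ) < t → d u = d0 u) ∧ tent d p = γ')) := by
    intro x
    constructor
    · rintro ⟨hag, hP⟩
      refine ⟨?_, fun u hu => ?_, hP⟩
      · rw [hag ⟨t, ht⟩ (Nat.lt_succ_self t), Function.update_self]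
      · rw [hag u (Nat.lt_succ_of_lt hu),
          Function.update_of_ne (Fin.ne_of_val_ne (by simpa using hu.ne)) _ _]
    · rintro ⟨hx, hag, hP⟩
      refine ⟨fun u hu => ?_, hP⟩
      rcases Nat.lt_succ_iff_lt_or_eq.mp hu with h | h
      · rw [hag u h, Function.update_of_ne (Fin.ne_of_val_ne (by simpa using h.ne)) _ _]
      · have hu' : u = ⟨t, ht⟩ := Fin.ext h
        rw [hu', Function.update_self, ← hx]
  calc (∑ x : Bool × Fin p,
        if (∀ u : Fin p, (u : ℕ) < t + 1 → d u = Function.update d0 ⟨t, ht⟩ x u)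
            ∧ tent d p = γ'
        then sufP ρ lam d t else 0)
      = ∑ x : Bool × Fin p,
          if x = d ⟨t, ht⟩ ∧ ((∀ u : Fin p, (u : ℕ) < t → d u = d0 u) ∧ tent d p = γ')
          then sufP ρ lam d t else 0 := by
        exact Finset.sum_congr rfl fun x _ => if_congr (key x) rfl rfl
    _ = if (∀ u : Fin p, (u : ℕ) < t → d u = d0 u) ∧ tent d p = γ'
        then sufP ρ lam d t else 0 := by
        by_cases hQ : (∀ u : Fin p, (u : ℕ) < t → d u = d0 u) ∧ tent d p = γ'
        · have h2 : ∀ x : Bool × Fin p,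
              (x = d ⟨t, ht⟩ ∧ ((∀ u : Fin p, (u : ℕ) < t → d u = d0 u) ∧ tent d p = γ'))
                ↔ x = d ⟨t, ht⟩ := fun x => and_iff_left hQ
          rw [Finset.sum_congr rfl fun x _ => if_congr (h2 x) rfl rfl,
            Finset.sum_ite_eq' Finset.univ (d ⟨t, ht⟩) (fun _ => sufP ρ lam d t),
            if_pos (Finset.mem_univ _), if_pos hQ]
        · simp [hQ]

lemma sum_agree_all' (d0 : Dec p) (γ' : Model p) :
    (∑ d : Dec p, if (∀ u : Fin p, (u : ℕ) < p → d u = d0 u) ∧ tent d p = γ'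
        then sufP ρ lam d p else 0)
      = if tent d0 p = γ' then sufP ρ lam d0 p else 0 := by
  have key : ∀ d : Dec p,
      ((∀ u : Fin p, (u : ℕ) < p → d u = d0 u) ∧ tent d p = γ') ↔ (d = d0 ∧ tent d p = γ') :=
    fun d => and_congr_left'
      ⟨fun h => funext fun u => h u u.isLt, fun h u _ => by rw [h]⟩
  calc (∑ d : Dec p, if (∀ u : Fin p, (u : ℕ) < p → d u = d0 u) ∧ tent d p = γ'
        then sufP ρ lam d p else 0)
      = ∑ d : Dec p, if d = d0 then (if tent d p = γ' then sufP ρ lam d p else 0) else 0 := by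
        refine Finset.sum_congr rfl fun d _ => ?_
        rw [if_congr (key d) rfl rfl]
        by_cases h1 : d = d0 <;> by_cases h2 : tent d p = γ' <;> simp [h1, h2]
    _ = if tent d0 p = γ' then sufP ρ lam d0 p else 0 := by
        rw [Finset.sum_ite_eq' Finset.univ d0
            (fun d => if tent d p = γ' then sufP ρ lam d p else 0),
          if_pos (Finset.mem_univ _)]

lemma stepProb_of_agree {t : ℕ} (ht : t < p) (d0 d : Dec p) (x : Bool × Fin p)
    (hag : ∀ u : Fin p, (u : ℕ) < t + 1 → d u = Function.update d0 ⟨t, ht⟩ x u) :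
    stepProb ρ lam d ⟨t, ht⟩
      = (if stopB d0 t then (if x.1 = true then (1:ℝ) else 0)
         else if x.1 = true then ρ (tent d0 t) else 1 - ρ (tent d0 t))
        * lam (tent d0 t) x.2 := by
  have h1 : ∀ u : Fin p, (u : ℕ) < t → d u = d0 u := by
    intro u hu
    rw [hag u (Nat.lt_succ_of_lt hu),
      Function.update_of_ne (Fin.ne_of_val_ne (by simpa using hu.ne)) _ _]
  have h2 : d ⟨t, ht⟩ = x := by
    rw [hag ⟨t, ht⟩ (Nat.lt_succ_self t), Function.update_self]
  have hval : ((⟨t, ht⟩ : Fin p) : ℕ) = t := rfl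
  simp only [stepProb, hval, tent_congr d d0 h1, h2, if_congr (stopB_congr d d0 h1) rfl rfl]

lemma factor_out (t : ℕ) (ht : t < p) (d0 : Dec p) (x : Bool × Fin p) (γ' : Model p) :
    (∑ d : Dec p,
        if (∀ u : Fin p, (u : ℕ) < t + 1 → d u = Function.update d0 ⟨t, ht⟩ x u)
            ∧ tent d p = γ'
        then sufP ρ lam d t else 0)
      = ((if stopB d0 t then (if x.1 = true then (1:ℝ) else 0)
          else if x.1 = true then ρ (tent d0 t) else 1 - ρ (tent d0 t))
          * lam (tent d0 t) x.2)
        * (∑ d : Dec p,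
            if (∀ u : Fin p, (u : ℕ) < t + 1 → d u = Function.update d0 ⟨t, ht⟩ x u)
                ∧ tent d p = γ'
            then sufP ρ lam d (t + 1) else 0) := by
  rw [Finset.mul_sum]
  refine Finset.sum_congr rfl fun d _ => ?_
  by_cases hc : (∀ u : Fin p, (u : ℕ) < t + 1 → d u = Function.update d0 ⟨t, ht⟩ x u)
      ∧ tent d p = γ'
  · rw [if_pos hc, if_pos hc, sufP_succ ρ lam d ht, stepProb_of_agree ρ lam ht d0 d x hc.1]
  · rw [if_neg hc, if_neg hc, mul_zero]

end SplitAux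

section Markov

variable {p : ℕ} (ρ : Model p → ℝ) (lam : Model p → Fin p → ℝ)

lemma suf_stop (hsel : ValidSel lam) : ∀ (n t : ℕ), t + n = p → ∀ d0 : Dec p, stopB d0 t →
    ∀ γ' : Model p,
    (∑ d : Dec p, if (∀ u : Fin p, (u : ℕ) < t → d u = d0 u) ∧ tent d p = γ'
        then sufP ρ lam d t else 0)
      = if γ' = tent d0 t then 1 else 0 := by
  intro n
  induction n with
  | zero =>
    intro t htn d0 _ γ'
    have ht : p = t := by omega
    subst ht
    rw [sum_agree_all' ρ lam d0 γ', sufP_of_ge ρ lam d0 le_rfl]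
    exact if_congr eq_comm rfl rfl
  | succ n ih =>
    intro t htn d0 hstop γ'
    have ht : t < p := by omega
    have hms : msize (tent d0 t) < p := lt_of_le_of_lt (msize_tent_le d0 t) ht
    rw [split_coord' ρ lam t ht d0 γ']
    have inner : ∀ x : Bool × Fin p,
        (∑ d : Dec p,
            if (∀ u : Fin p, (u : ℕ) < t + 1 → d u = Function.update d0 ⟨t, ht⟩ x u)
                ∧ tent d p = γ'
            then sufP ρ lam d t else 0)
        = ((if x.1 = true then (1:ℝ) else 0) * lam (tent d0 t) x.2)
            * (if γ' = tent d0 t then 1 else 0) := by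
      intro x
      rw [factor_out ρ lam t ht d0 x γ', if_pos hstop]
      set d0x := Function.update d0 ⟨t, ht⟩ x with hd0x
      have hd0xt : d0x ⟨t, ht⟩ = x := Function.update_self _ _ _
      cases hx : x.1 with
      | false => simp [hx]
      | true =>
        have hagux : ∀ u : Fin p, (u : ℕ) < t → d0x u = d0 u := fun u hu =>
          Function.update_of_ne (Fin.ne_of_val_ne (by simpa using hu.ne)) _ _
        have hstopx : stopB d0x (t + 1) := by
          obtain ⟨s, hs, h1⟩ := hstop
          exact ⟨s, by omega, by rw [hagux s hs]; exact h1⟩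
        have htent : tent d0x (t + 1) = tent d0 t := by
          rw [tent_succ_lt d0x t ht, if_pos (by rw [hd0xt]; exact hx)]
          exact tent_congr d0x d0 hagux
        rw [ih (t + 1) (by omega) d0x hstopx γ', htent]
    rw [Finset.sum_congr rfl fun x _ => inner x, ← Finset.sum_mul]
    have hco : (∑ x : Bool × Fin p,
        (if x.1 = true then (1:ℝ) else 0) * lam (tent d0 t) x.2) = 1 := by
      rw [Fintype.sum_prod_type, Fintype.sum_bool]
      simp only [if_true, Bool.false_eq_true, if_false, one_mul, zero_mul,
        Finset.sum_const_zero, add_zero]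
      exact (hsel _ hms).2.1
    rw [hco, one_mul]

lemma G_total (hsel : ValidSel lam) : ∀ (n : ℕ) (γ : Model p), msize γ + n = p →
    (∑ γ' : Model p, G ρ lam n γ γ') = 1 := by
  intro n
  induction n with
  | zero =>
    intro γ _
    simp only [G]
    rw [Finset.sum_ite_eq' Finset.univ γ (fun _ => (1:ℝ)), if_pos (Finset.mem_univ _)]
  | succ n ih =>
    intro γ hn
    have hms : msize γ < p := by omega
    simp only [G]
    rw [Finset.sum_add_distrib, ← Finset.mul_sum, ← Finset.mul_sum,
      Finset.sum_ite_eq' Finset.univ γ (fun _ => (1:ℝ)), if_pos (Finset.mem_univ _),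
      Finset.sum_comm]
    have hjs : ∀ j ∈ Finset.univ.filter (fun j => γ j = false),
        (∑ γ' : Model p, lam γ j * G ρ lam n (mplus γ j) γ') = lam γ j := by
      intro j hj
      have hjf : γ j = false := by simpa using hj
      rw [← Finset.mul_sum, ih (mplus γ j) (by rw [msize_mplus hjf]; omega), mul_one]
    rw [Finset.sum_congr rfl hjs]
    have hfil : (∑ j ∈ Finset.univ.filter (fun j => γ j = false), lam γ j)
        = ∑ j, lam γ j := by
      apply Finset.sum_subset (Finset.filter_subset _ _)
      intro j _ hj
      have hjt : γ j = true := by simpa using hj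
      exact (hsel γ hms).2.2 j hjt
    rw [hfil, (hsel γ hms).2.1, mul_one]
    ring

lemma G_eq (hsel : ValidSel lam) : ∀ (n t : ℕ), t + n = p → ∀ d0 : Dec p,
    ¬ stopB d0 t → msize (tent d0 t) = t → ∀ γ' : Model p,
    (∑ d : Dec p, if (∀ u : Fin p, (u : ℕ) < t → d u = d0 u) ∧ tent d p = γ'
        then sufP ρ lam d t else 0)
      = G ρ lam n (tent d0 t) γ' := by
  intro n
  induction n with
  | zero =>
    intro t htn d0 _ _ γ'
    have ht : p = t := by omega
    subst ht
    rw [sum_agree_all' ρ lam d0 γ', sufP_of_ge ρ lam d0 le_rfl]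
    simp only [G]
    exact if_congr eq_comm rfl rfl
  | succ n ih =>
    intro t htn d0 hnstop hmst γ'
    have ht : t < p := by omega
    have hms : msize (tent d0 t) < p := by omega
    rw [split_coord' ρ lam t ht d0 γ']
    have inner : ∀ x : Bool × Fin p,
        (∑ d : Dec p,
            if (∀ u : Fin p, (u : ℕ) < t + 1 → d u = Function.update d0 ⟨t, ht⟩ x u)
                ∧ tent d p = γ'
            then sufP ρ lam d t else 0)
        = ((if x.1 = true then ρ (tent d0 t) else 1 - ρ (tent d0 t)) * lam (tent d0 t) x.2)
            * (if x.1 = true then (if γ' = tent d0 t then (1:ℝ) else 0)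
               else G ρ lam n (mplus (tent d0 t) x.2) γ') := by
      intro x
      rw [factor_out ρ lam t ht d0 x γ', if_neg hnstop]
      set d0x := Function.update d0 ⟨t, ht⟩ x with hd0x
      have hd0xt : d0x ⟨t, ht⟩ = x := Function.update_self _ _ _
      have hagux : ∀ u : Fin p, (u : ℕ) < t → d0x u = d0 u := fun u hu =>
        Function.update_of_ne (Fin.ne_of_val_ne (by simpa using hu.ne)) _ _
      cases hx : x.1 with
      | true =>
        have hstopx : stopB d0x (t + 1) :=
          ⟨⟨t, ht⟩, Nat.lt_succ_self t, by rw [hd0xt]; exact hx⟩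
        have htent : tent d0x (t + 1) = tent d0 t := by
          rw [tent_succ_lt d0x t ht, if_pos (by rw [hd0xt]; exact hx)]
          exact tent_congr d0x d0 hagux
        rw [suf_stop ρ lam hsel n (t + 1) (by omega) d0x hstopx γ', htent]
        simp
      | false =>
        cases hj : (tent d0 t) x.2 with
        | true =>
          have hl : lam (tent d0 t) x.2 = 0 := (hsel _ hms).2.2 x.2 hj
          simp [hl]
        | false =>
          have hnstopx : ¬ stopB d0x (t + 1) := by
            rintro ⟨s, hs, h1⟩
            by_cases hst : (s : ℕ) < t
            · exact hnstop ⟨s, hst, by rw [← hagux s hst]; exact h1⟩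
            · have hseq : s = ⟨t, ht⟩ := Fin.ext (show (s : ℕ) = t by omega)
              rw [hseq, hd0xt, hx] at h1
              exact Bool.false_ne_true h1
          have htent : tent d0x (t + 1) = mplus (tent d0 t) x.2 := by
            rw [tent_succ_lt d0x t ht,
              if_neg (by rw [hd0xt, hx]; exact Bool.false_ne_true)]
            rw [tent_congr d0x d0 hagux, hd0xt]
          have hmsx : msize (tent d0x (t + 1)) = t + 1 := by
            rw [htent, msize_mplus hj, hmst]
          rw [ih (t + 1) (by omega) d0x hnstopx hmsx γ', htent]
          simp
    rw [Finset.sum_congr rfl fun x _ => inner x, Fintype.sum_prod_type, Fintype.sum_bool]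
    simp only [if_true, Bool.false_eq_true, if_false]
    have h1 : (∑ j : Fin p, ρ (tent d0 t) * lam (tent d0 t) j
          * (if γ' = tent d0 t then (1:ℝ) else 0))
        = ρ (tent d0 t) * (if γ' = tent d0 t then (1:ℝ) else 0) := by
      rw [← Finset.sum_mul, ← Finset.mul_sum, (hsel _ hms).2.1, mul_one]
    have h2 : (∑ j : Fin p, (1 - ρ (tent d0 t)) * lam (tent d0 t) j
          * G ρ lam n (mplus (tent d0 t) j) γ')
        = (1 - ρ (tent d0 t)) * ∑ j ∈ Finset.univ.filter (fun j => tent d0 t j = false),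
            lam (tent d0 t) j * G ρ lam n (mplus (tent d0 t) j) γ' := by
      rw [Finset.mul_sum]
      rw [Finset.sum_filter]
      refine Finset.sum_congr rfl fun j _ => ?_
      cases hj : (tent d0 t) j with
      | true =>
        have hl : lam (tent d0 t) j = 0 := (hsel _ hms).2.2 j hj
        simp [hl]
      | false => simp [mul_assoc]
    have harr1 : (∑ j : Fin p, (ρ (tent d0 t) * lam (tent d0 t) j)
          * (if γ' = tent d0 t then (1:ℝ) else 0))
        = ∑ j : Fin p, ρ (tent d0 t) * lam (tent d0 t) j
          * (if γ' = tent d0 t then (1:ℝ) else 0) := rfl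
    have harr2 : (∑ j : Fin p, ((1 - ρ (tent d0 t)) * lam (tent d0 t) j)
          * G ρ lam n (mplus (tent d0 t) j) γ')
        = ∑ j : Fin p, (1 - ρ (tent d0 t)) * lam (tent d0 t) j
          * G ρ lam n (mplus (tent d0 t) j) γ' := rfl
    rw [harr1, harr2, h1, h2]
    simp only [G]

end Markov

section Assemble

variable {p : ℕ} (ρ : Model p → ℝ) (lam : Model p → Fin p → ℝ)

lemma stepProb_congr (d d0 : Dec p) (u : Fin p)
    (h : ∀ v : Fin p, (v : ℕ) ≤ (u : ℕ) → d v = d0 v) :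
    stepProb ρ lam d u = stepProb ρ lam d0 u := by
  have h1 : ∀ v : Fin p, (v : ℕ) < (u : ℕ) → d v = d0 v := fun v hv => h v hv.le
  simp only [stepProb, tent_congr d d0 h1, h u le_rfl, if_congr (stopB_congr d d0 h1) rfl rfl]

lemma preP_congr (d d0 : Dec p) (t : ℕ) (h : ∀ u : Fin p, (u : ℕ) < t → d u = d0 u) :
    preP ρ lam d t = preP ρ lam d0 t := by
  refine Finset.prod_congr rfl fun u hu => ?_
  have hut : (u : ℕ) < t := by simpa using hu
  exact stepProb_congr ρ lam d d0 u fun v hv => h v (lt_of_le_of_lt hv hut)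

/-- Canonical representative of the cylinder determined by a prefix `a`. -/
def rep (t : ℕ) (a : {u : Fin p // (u : ℕ) < t} → Bool × Fin p) : Dec p :=
  fun u => if hu : (u : ℕ) < t then a ⟨u, hu⟩ else (true, u)

lemma cylinder (t : ℕ) (F : Dec p → ℝ) :
    (∑ d : Dec p, F d)
      = ∑ a : ({u : Fin p // (u : ℕ) < t} → Bool × Fin p), ∑ d : Dec p,
          if (∀ u : Fin p, (u : ℕ) < t → d u = rep t a u) then F d else 0 := by
  have hcomm : (∑ a : ({u : Fin p // (u : ℕ) < t} → Bool × Fin p), ∑ d : Dec p,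
      if (∀ u : Fin p, (u : ℕ) < t → d u = rep t a u) then F d else 0)
      = ∑ d : Dec p, ∑ a : ({u : Fin p // (u : ℕ) < t} → Bool × Fin p),
          if (∀ u : Fin p, (u : ℕ) < t → d u = rep t a u) then F d else 0 :=
    Finset.sum_comm
  rw [hcomm]
  refine Finset.sum_congr rfl fun d _ => ?_
  symm
  have key : ∀ a : ({u : Fin p // (u : ℕ) < t} → Bool × Fin p),
      (∀ u : Fin p, (u : ℕ) < t → d u = rep t a u)
        ↔ a = (fun v : {u : Fin p // (u : ℕ) < t} => d v.1) := by
    intro a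
    constructor
    · intro h
      funext v
      have := h v.1 v.2
      rw [this, rep, dif_pos v.2]
    · rintro rfl u hu
      rw [rep, dif_pos hu]
  rw [Finset.sum_congr rfl fun a _ => if_congr (key a) rfl rfl,
    Finset.sum_ite_eq' Finset.univ (fun v : {u : Fin p // (u : ℕ) < t} => d v.1)
      (fun _ => F d),
    if_pos (Finset.mem_univ _)]

lemma inner_num (t : ℕ) (d0 : Dec p) (γ γ' : Model p) :
    (∑ d : Dec p, if (∀ u : Fin p, (u : ℕ) < t → d u = d0 u)
        then (if tent d p = γ' ∧ tent d t = γ then pathProb ρ lam d else 0) else 0)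
      = if tent d0 t = γ
        then preP ρ lam d0 t * (∑ d : Dec p,
          if (∀ u : Fin p, (u : ℕ) < t → d u = d0 u) ∧ tent d p = γ'
          then sufP ρ lam d t else 0)
        else 0 := by
  by_cases hγ : tent d0 t = γ
  · rw [if_pos hγ, Finset.mul_sum]
    refine Finset.sum_congr rfl fun d _ => ?_
    by_cases hag : ∀ u : Fin p, (u : ℕ) < t → d u = d0 u
    · rw [if_pos hag]
      have htd : tent d t = γ := (tent_congr d d0 hag).trans hγ
      by_cases hp' : tent d p = γ'
      · rw [if_pos ⟨hp', htd⟩, if_pos ⟨hag, hp'⟩, pathProb_eq_pre_suf ρ lam d t,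
          preP_congr ρ lam d d0 t hag]
      · rw [if_neg (fun hc => hp' hc.1), if_neg (fun hc => hp' hc.2), mul_zero]
    · rw [if_neg hag, if_neg (fun hc => hag hc.1), mul_zero]
  · rw [if_neg hγ]
    refine Finset.sum_eq_zero fun d _ => ?_
    by_cases hag : ∀ u : Fin p, (u : ℕ) < t → d u = d0 u
    · rw [if_pos hag, if_neg (fun hc => hγ ((tent_congr d d0 hag).symm.trans hc.2))]
    · rw [if_neg hag]

lemma inner_den (t : ℕ) (d0 : Dec p) (γ : Model p) :
    (∑ d : Dec p, if (∀ u : Fin p, (u : ℕ) < t → d u = d0 u)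
        then (if tent d t = γ then pathProb ρ lam d else 0) else 0)
      = if tent d0 t = γ
        then preP ρ lam d0 t * (∑ d : Dec p,
          if (∀ u : Fin p, (u : ℕ) < t → d u = d0 u) then sufP ρ lam d t else 0)
        else 0 := by
  by_cases hγ : tent d0 t = γ
  · rw [if_pos hγ, Finset.mul_sum]
    refine Finset.sum_congr rfl fun d _ => ?_
    by_cases hag : ∀ u : Fin p, (u : ℕ) < t → d u = d0 u
    · have htd : tent d t = γ := (tent_congr d d0 hag).trans hγ
      rw [if_pos hag, if_pos htd, if_pos hag, pathProb_eq_pre_suf ρ lam d t,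
        preP_congr ρ lam d d0 t hag]
    · rw [if_neg hag, if_neg hag, mul_zero]
  · rw [if_neg hγ]
    refine Finset.sum_eq_zero fun d _ => ?_
    by_cases hag : ∀ u : Fin p, (u : ℕ) < t → d u = d0 u
    · rw [if_pos hag, if_neg (fun hc => hγ ((tent_congr d d0 hag).symm.trans hc))]
    · rw [if_neg hag]

lemma suf_total_good (hsel : ValidSel lam) (n t : ℕ) (htn : t + n = p) (d0 : Dec p)
    (hnstop : ¬ stopB d0 t) (hmst : msize (tent d0 t) = t) :
    (∑ d : Dec p, if (∀ u : Fin p, (u : ℕ) < t → d u = d0 u)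
        then sufP ρ lam d t else 0) = 1 := by
  have hswap : (∑ d : Dec p, if (∀ u : Fin p, (u : ℕ) < t → d u = d0 u)
        then sufP ρ lam d t else 0)
      = ∑ γ'' : Model p, ∑ d : Dec p,
          if (∀ u : Fin p, (u : ℕ) < t → d u = d0 u) ∧ tent d p = γ''
          then sufP ρ lam d t else 0 := by
    have hcomm : (∑ γ'' : Model p, ∑ d : Dec p,
        if (∀ u : Fin p, (u : ℕ) < t → d u = d0 u) ∧ tent d p = γ''
        then sufP ρ lam d t else 0)
        = ∑ d : Dec p, ∑ γ'' : Model p,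
            if (∀ u : Fin p, (u : ℕ) < t → d u = d0 u) ∧ tent d p = γ''
            then sufP ρ lam d t else 0 := Finset.sum_comm
    rw [hcomm]
    refine Finset.sum_congr rfl fun d _ => ?_
    symm
    by_cases hag : ∀ u : Fin p, (u : ℕ) < t → d u = d0 u
    · rw [Finset.sum_congr rfl fun γ'' _ => if_congr (and_iff_right hag) rfl rfl,
        Finset.sum_ite_eq Finset.univ (tent d p) (fun _ => sufP ρ lam d t),
        if_pos (Finset.mem_univ _), if_pos hag]
    · rw [if_neg hag]
      exact Finset.sum_eq_zero fun γ'' _ => if_neg (fun hc => hag hc.1)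
  rw [hswap, Finset.sum_congr rfl fun γ'' _ => G_eq ρ lam hsel n t htn d0 hnstop hmst γ'']
  exact G_total ρ lam hsel n (tent d0 t) (by rw [hmst]; exact htn)

end Assemble

/-- **`φ` as a conditional expectation.** For every model `γ` reachable by the prior chain,
`φ(γ)` is the conditional expectation of `BF₀` of the final model given that the chain visits
`γ` at step `|γ|`. -/
theorem phi_conditional_expectation {p : ℕ} (ρ : Model p → ℝ) (lam : Model p → Fin p → ℝ)
    (BF φ : Model p → ℝ) (hpfs : IsPFS ρ lam) (hBF : ∀ γ, 0 < BF γ)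
    (hφfull : ∀ γ : Model p, msize γ = p → φ γ = BF γ)
    (hφrec : ∀ γ : Model p, msize γ < p →
      φ γ = ρ γ * BF γ + (1 - ρ γ) *
        ∑ j ∈ Finset.univ.filter (fun j => γ j = false), lam γ j * φ (mplus γ j))
    (γ : Model p)
    (hreach : 0 < ∑ d : Dec p, if tent d (msize γ) = γ then pathProb ρ lam d else 0) :
    φ γ = ∑ γ' ∈ Finset.univ.filter (fun γ' : Model p => ∀ j, γ j = true → γ' j = true),
        ((∑ d : Dec p,
            if tent d p = γ' ∧ tent d (msize γ) = γ then pathProb ρ lam d else 0) /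
          (∑ d : Dec p, if tent d (msize γ) = γ then pathProb ρ lam d else 0)) * BF γ' := by
  obtain ⟨hstopv, hsel⟩ := hpfs
  have htle : msize γ ≤ p := msize_le γ
  set n := p - msize γ with hn
  have htn : msize γ + n = p := by omega
  -- evaluate the denominator over cylinders
  have hAden : (∑ d : Dec p, if tent d (msize γ) = γ then pathProb ρ lam d else 0)
      = ∑ a : ({u : Fin p // (u : ℕ) < msize γ} → Bool × Fin p),
          (if tent (rep (msize γ) a) (msize γ) = γ
           then preP ρ lam (rep (msize γ) a) (msize γ) else 0) := by
    calc (∑ d : Dec p, if tent d (msize γ) = γ then pathProb ρ lam d else 0)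
        = ∑ a : ({u : Fin p // (u : ℕ) < msize γ} → Bool × Fin p), ∑ d : Dec p,
            if (∀ u : Fin p, (u : ℕ) < msize γ → d u = rep (msize γ) a u)
            then (if tent d (msize γ) = γ then pathProb ρ lam d else 0) else 0 :=
          cylinder (msize γ) _
      _ = ∑ a : ({u : Fin p // (u : ℕ) < msize γ} → Bool × Fin p),
            (if tent (rep (msize γ) a) (msize γ) = γ
             then preP ρ lam (rep (msize γ) a) (msize γ) else 0) := by
          refine Finset.sum_congr rfl fun a _ => ?_
          rw [inner_den ρ lam (msize γ) (rep (msize γ) a) γ]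
          by_cases hγa : tent (rep (msize γ) a) (msize γ) = γ
          · rw [if_pos hγa, if_pos hγa]
            by_cases hpre : preP ρ lam (rep (msize γ) a) (msize γ) = 0
            · rw [hpre, zero_mul]
            · have hnstop : ¬ stopB (rep (msize γ) a) (msize γ) := by
                intro hs
                have := preP_stop ρ lam (rep (msize γ) a) (msize γ) hs hpre
                rw [hγa] at this
                omega
              rw [suf_total_good ρ lam hsel n (msize γ) htn _ hnstop (by rw [hγa]), mul_one]
          · rw [if_neg hγa, if_neg hγa]
  -- the numerator equals the denominator times `G`
  have hBnum : ∀ γ' : Model p,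
      (∑ d : Dec p, if tent d p = γ' ∧ tent d (msize γ) = γ then pathProb ρ lam d else 0)
      = (∑ d : Dec p, if tent d (msize γ) = γ then pathProb ρ lam d else 0)
          * G ρ lam n γ γ' := by
    intro γ'
    rw [hAden, Finset.sum_mul]
    calc (∑ d : Dec p, if tent d p = γ' ∧ tent d (msize γ) = γ then pathProb ρ lam d else 0)
        = ∑ a : ({u : Fin p // (u : ℕ) < msize γ} → Bool × Fin p), ∑ d : Dec p,
            if (∀ u : Fin p, (u : ℕ) < msize γ → d u = rep (msize γ) a u)
            then (if tent d p = γ' ∧ tent d (msize γ) = γ then pathProb ρ lam d else 0)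
            else 0 :=
          cylinder (msize γ) _
      _ = ∑ a : ({u : Fin p // (u : ℕ) < msize γ} → Bool × Fin p),
            (if tent (rep (msize γ) a) (msize γ) = γ
             then preP ρ lam (rep (msize γ) a) (msize γ) else 0) * G ρ lam n γ γ' := by
          refine Finset.sum_congr rfl fun a _ => ?_
          rw [inner_num ρ lam (msize γ) (rep (msize γ) a) γ γ']
          by_cases hγa : tent (rep (msize γ) a) (msize γ) = γ
          · rw [if_pos hγa, if_pos hγa]
            by_cases hpre : preP ρ lam (rep (msize γ) a) (msize γ) = 0
            · rw [hpre, zero_mul, zero_mul]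
            · have hnstop : ¬ stopB (rep (msize γ) a) (msize γ) := by
                intro hs
                have := preP_stop ρ lam (rep (msize γ) a) (msize γ) hs hpre
                rw [hγa] at this
                omega
              rw [G_eq ρ lam hsel n (msize γ) htn _ hnstop (by rw [hγa]) γ', hγa]
          · rw [if_neg hγa, if_neg hγa, zero_mul]
  have hA : (∑ d : Dec p, if tent d (msize γ) = γ then pathProb ρ lam d else 0) ≠ 0 :=
    ne_of_gt hreach
  have hterm : ∀ γ' ∈ Finset.univ.filter
      (fun γ' : Model p => ∀ j, γ j = true → γ' j = true),
      ((∑ d : Dec p,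
          if tent d p = γ' ∧ tent d (msize γ) = γ then pathProb ρ lam d else 0) /
        (∑ d : Dec p, if tent d (msize γ) = γ then pathProb ρ lam d else 0)) * BF γ'
      = G ρ lam n γ γ' * BF γ' := by
    intro γ' _
    rw [hBnum γ', mul_div_cancel_left₀ _ hA]
  rw [Finset.sum_congr rfl hterm, G_sum ρ lam BF φ hφfull hφrec n γ htn]
end
end
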